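/- arXiv:2410.08066 — 12 statements merged into one kernel-verified Lean document; each statement's English description precedes it below -/
import Mathlib

section
/- If X is a copositive p×p matrix and τ is a zero of X (i.e., τ ≥ 0, τ ≠ 0, τᵀXτ = 0), then Xτ ≥ 0 componentwise. -/
/-! If `(Xτ)ₖ < 0`, moving from the zero `τ` a little in the direction of the `k`-th unit vector
keeps the vector nonnegative but makes the quadratic form negative: by symmetry of `X` its
first-order change is `2ε(Xτ)ₖ`, which dominates the second-order term `ε²Xₖₖ`. -/

open Matrix BigOperators

/-- A symmetric real matrix is copositive if `tᵀXt ≥ 0` for all nonnegative `t`. -/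
def Copositive {p : ℕ} (X : Matrix (Fin p) (Fin p) ℝ) : Prop :=
  ∀ t : Fin p → ℝ, (∀ k, 0 ≤ t k) → 0 ≤ t ⬝ᵥ X.mulVec t

/-- A zero of `X` is a nonzero nonnegative vector `τ` with `τᵀXτ = 0`. -/
def IsZeroOf {p : ℕ} (X : Matrix (Fin p) (Fin p) ℝ) (τ : Fin p → ℝ) : Prop :=
  (∀ k, 0 ≤ τ k) ∧ τ ≠ 0 ∧ τ ⬝ᵥ X.mulVec τ = 0

open Filter Topology

theorem Matrix.IsSymm.dotProduct_mulVec_add_smul_single {ι R : Type*} [Fintype ι]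
    [DecidableEq ι] [CommRing R] {X : Matrix ι ι R} (hX : X.IsSymm) (v : ι → R) (k : ι)
    (ε : R) :
    (v + ε • Pi.single k 1) ⬝ᵥ X *ᵥ (v + ε • Pi.single k 1) =
      v ⬝ᵥ X *ᵥ v + ε * (2 * (X *ᵥ v) k + ε * X k k) := by
  have hcross : Pi.single k 1 ⬝ᵥ X *ᵥ v = (X *ᵥ v) k := single_one_dotProduct k _
  have hcross' : v ⬝ᵥ X *ᵥ Pi.single k 1 = (X *ᵥ v) k := by
    rw [dotProduct_mulVec, ← mulVec_transpose, hX.eq, dotProduct_single_one]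
  have hdiag : Pi.single k 1 ⬝ᵥ X *ᵥ Pi.single k 1 = X k k := by
    rw [single_one_dotProduct, mulVec_single_one, col_apply]
  simp only [mulVec_add, mulVec_smul, dotProduct_add, add_dotProduct, dotProduct_smul,
    smul_dotProduct, smul_eq_mul, hcross, hcross', hdiag]
  ring

theorem nonneg_of_forall_pos_nonneg_add_mul {a c : ℝ} (h : ∀ ε > 0, 0 ≤ a + ε * c) : 0 ≤ a := by
  have hlim : Tendsto (fun ε => a + ε * c) (𝓝[>] 0) (𝓝 a) :=
    ((by fun_prop : Continuous fun ε : ℝ => a + ε * c).tendsto' 0 a (by simp)).mono_left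
      nhdsWithin_le_nhds
  exact ge_of_tendsto hlim (eventually_nhdsWithin_of_forall h)

theorem zero_of_copositive_mulVec_nonneg {p : ℕ} (X : Matrix (Fin p) (Fin p) ℝ)
    (hX : X.IsSymm) (hcop : Copositive X) (τ : Fin p → ℝ) (hτ : IsZeroOf X τ) :
    ∀ k, 0 ≤ X.mulVec τ k := by
  obtain ⟨hτ_nonneg, -, hτ_zero⟩ := hτ
  intro k
  suffices 0 ≤ 2 * X.mulVec τ k by linarith
  refine nonneg_of_forall_pos_nonneg_add_mul (c := X k k) fun ε hε => ?_
  have hsingle : (0 : Fin p → ℝ) ≤ Pi.single k 1 := Pi.single_nonneg.2 zero_le_one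
  have hperturbed := hcop (τ + ε • Pi.single k 1) fun j =>
    add_nonneg (hτ_nonneg j) (smul_nonneg hε.le (hsingle j))
  rw [hX.dotProduct_mulVec_add_smul_single, hτ_zero, zero_add] at hperturbed
  exact nonneg_of_mul_nonneg_right hperturbed hε
end

section
/- If X is a copositive p×p matrix, τ is a zero of X, and t is any nonnegative vector, then tᵀXτ ≥ 0. -/
open Matrix BigOperators

theorem dot_zero_of_copositive_nonneg {p : ℕ} (X : Matrix (Fin p) (Fin p) ℝ)
    (hX : X.IsSymm) (hcop : Copositive X) (τ : Fin p → ℝ) (hτ : IsZeroOf X τ)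
    (t : Fin p → ℝ) (ht : ∀ k, 0 ≤ t k) :
    0 ≤ t ⬝ᵥ X.mulVec τ := by
  obtain ⟨hτ0, -, hτz⟩ := hτ
  have hsym : τ ⬝ᵥ X.mulVec t = t ⬝ᵥ X.mulVec τ := by
    rw [Matrix.dotProduct_mulVec, ← Matrix.mulVec_transpose, hX.eq, dotProduct_comm]
  have key : ∀ ε : ℝ, 0 < ε →
      0 ≤ ε ^ 2 * (t ⬝ᵥ X.mulVec t) + 2 * ε * (t ⬝ᵥ X.mulVec τ) := by
    intro ε hε
    have h := hcop (τ + ε • t) (fun k => by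
      have := ht k; have := hτ0 k
      simp only [Pi.add_apply, Pi.smul_apply, smul_eq_mul]
      positivity)
    have expand : (τ + ε • t) ⬝ᵥ X.mulVec (τ + ε • t) =
        τ ⬝ᵥ X.mulVec τ + ε ^ 2 * (t ⬝ᵥ X.mulVec t) + 2 * ε * (t ⬝ᵥ X.mulVec τ) := by
      simp only [Matrix.mulVec_add, Matrix.mulVec_smul, dotProduct_add,
        add_dotProduct, smul_dotProduct, dotProduct_smul,
        smul_eq_mul, hsym]
      ring
    rw [expand, hτz] at h
    linarith
  by_contra hneg
  push_neg at hneg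
  set b := t ⬝ᵥ X.mulVec τ
  set a := t ⬝ᵥ X.mulVec t
  have ha : 0 ≤ a := hcop t ht
  rcases eq_or_lt_of_le ha with ha0 | hapos
  · have := key 1 one_pos
    rw [← ha0] at this
    linarith
  · have hε : 0 < -b / a := div_pos (by linarith) hapos
    have := key (-b / a) hε
    have hab : (-b / a) * a = -b := div_mul_cancel₀ _ (ne_of_gt hapos)
    nlinarith [sq_nonneg (-b / a)]
end

section
/- Let X be a copositive p×p matrix and let P̄ ⊆ {1,…,p} be nonempty. If the principal submatrix X(P̄) has rank |P̄| − 1 and there exists a vector t̄ indexed by P̄ with t̄ > 0, ‖t̄‖₁ = 1, and X(P̄)t̄ = 0, then the vector τ̄ defined by τ̄ₖ = t̄ₖ for k ∈ P̄ and τ̄ₖ = 0 otherwise is a normalized minimal zero of X. -/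
open Matrix BigOperators

/-- Support of a vector. -/
def supp {p : ℕ} (t : Fin p → ℝ) : Set (Fin p) := {k | 0 < t k}

/-- A minimal zero: a zero such that no zero has support strictly contained in its support. -/
def IsMinimalZero {p : ℕ} (X : Matrix (Fin p) (Fin p) ℝ) (τ : Fin p → ℝ) : Prop :=
  IsZeroOf X τ ∧ ∀ t : Fin p → ℝ, IsZeroOf X t → ¬ (supp t ⊂ supp τ)

/-- Principal submatrix of `X` with rows and columns indexed by the finite set `Q`. -/
def principalSub {p : ℕ} (X : Matrix (Fin p) (Fin p) ℝ) (Q : Finset (Fin p)) :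
    Matrix {k // k ∈ Q} {k // k ∈ Q} ℝ :=
  X.submatrix (fun i => (i : Fin p)) (fun j => (j : Fin p))

/- ---------- auxiliary lemmas ---------- -/

lemma quad_aux (a b c : ℝ) (hc : 0 < c)
    (h : ∀ δ : ℝ, |δ| ≤ c → 0 ≤ 2*δ*a + δ^2*b) : a = 0 := by
  by_contra h0
  have hb : 0 ≤ b := by
    have h1 := h c (by rw [abs_of_pos hc])
    have h2 := h (-c) (by rw [abs_neg, abs_of_pos hc])
    nlinarith [mul_pos hc hc]
  set ε := min c (|a|/(b+1)) with hε
  have hεpos : 0 < ε := lt_min hc (div_pos (abs_pos.2 h0) (by linarith))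
  have hεa : ε * (b+1) ≤ |a| := by
    have : ε ≤ |a|/(b+1) := min_le_right _ _
    rw [le_div_iff₀ (by linarith)] at this; linarith
  rcases le_or_gt 0 a with ha | ha
  · have hd := h (-ε) (by rw [abs_neg, abs_of_pos hεpos]; exact min_le_left _ _)
    rw [abs_of_nonneg ha] at hεa
    nlinarith [mul_pos hεpos hεpos]
  · have hd := h ε (by rw [abs_of_pos hεpos]; exact min_le_left _ _)
    rw [abs_of_neg ha] at hεa
    nlinarith [mul_pos hεpos hεpos]

lemma dot_mulVec_symm {n : Type*} [Fintype n] (A : Matrix n n ℝ) (hA : A.IsSymm)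
    (x y : n → ℝ) : x ⬝ᵥ A.mulVec y = y ⬝ᵥ A.mulVec x := by
  rw [dotProduct_mulVec, ← Matrix.mulVec_transpose, hA.eq, dotProduct_comm]

lemma interior_zero {n : Type*} [Fintype n] [DecidableEq n] (A : Matrix n n ℝ)
    (hA : A.IsSymm) (hcop : ∀ s : n → ℝ, (∀ k, 0 ≤ s k) → 0 ≤ s ⬝ᵥ A.mulVec s)
    (v : n → ℝ) (hv : ∀ k, 0 < v k) (hq : v ⬝ᵥ A.mulVec v = 0) :
    A.mulVec v = 0 := by
  have hsymm := dot_mulVec_symm A hA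
  funext i
  set w : n → ℝ := Pi.single i 1 with hw
  have key : ∀ δ : ℝ, |δ| ≤ v i →
      0 ≤ 2 * δ * (w ⬝ᵥ A.mulVec v) + δ^2 * (w ⬝ᵥ A.mulVec w) := by
    intro δ hδ
    have hnn : ∀ k, 0 ≤ (v + δ • w) k := by
      intro k
      rcases eq_or_ne k i with rfl | hk
      · simp only [hw, Pi.add_apply, Pi.smul_apply, Pi.single_eq_same, smul_eq_mul, mul_one]
        have := abs_le.mp hδ
        linarith
      · simp [hw, Pi.single_eq_of_ne hk, (hv k).le]
    have h0 := hcop (v + δ • w) hnn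
    have expand : (v + δ • w) ⬝ᵥ A.mulVec (v + δ • w)
        = v ⬝ᵥ A.mulVec v + 2 * δ * (w ⬝ᵥ A.mulVec v)
          + δ^2 * (w ⬝ᵥ A.mulVec w) := by
      rw [Matrix.mulVec_add, Matrix.mulVec_smul, dotProduct_add, add_dotProduct,
        add_dotProduct, dotProduct_smul, dotProduct_smul, smul_dotProduct,
        smul_dotProduct, hsymm v w]
      simp only [smul_eq_mul]
      ring
    rw [expand, hq, zero_add] at h0
    simpa using h0
  have h2 := quad_aux _ _ _ (hv i) key
  have : w ⬝ᵥ A.mulVec v = A.mulVec v i := by simp [hw]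
  rw [this] at h2
  simpa using h2

lemma sum_ext {p : ℕ} (Q : Finset (Fin p)) (s : {k // k ∈ Q} → ℝ)
    (F : Fin p → ℝ → ℝ) (hF : ∀ k, F k 0 = 0) :
    ∑ k : Fin p, F k (if h : k ∈ Q then s ⟨k, h⟩ else 0)
      = ∑ k : {k // k ∈ Q}, F k.1 (s k) := by
  rw [Finset.univ_eq_attach,
    ← Finset.sum_subset (Finset.subset_univ Q)
      (fun k _ hk => by rw [dif_neg hk, hF]),
    ← Finset.sum_attach Q (fun k => F k (if h : k ∈ Q then s ⟨k, h⟩ else 0))]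
  exact Finset.sum_congr rfl fun k _ => by rw [dif_pos k.2]

lemma ext_eq_quad {p : ℕ} (X : Matrix (Fin p) (Fin p) ℝ) (Q : Finset (Fin p))
    (s : {k // k ∈ Q} → ℝ) :
    (fun k => if h : k ∈ Q then s ⟨k, h⟩ else 0) ⬝ᵥ
        X.mulVec (fun k => if h : k ∈ Q then s ⟨k, h⟩ else 0)
      = s ⬝ᵥ (principalSub X Q).mulVec s := by
  unfold dotProduct
  rw [sum_ext Q s (fun k x => x * (X.mulVec (fun k => if h : k ∈ Q then s ⟨k, h⟩ else 0)) k)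
    (fun k => zero_mul _)]
  apply Finset.sum_congr rfl
  intro i _
  congr 1
  show (fun j => X i.1 j) ⬝ᵥ _ = _
  unfold Matrix.mulVec dotProduct
  rw [sum_ext Q s (fun k x => X i.1 k * x) (fun k => mul_zero _)]
  rfl

/- ---------- main theorem ---------- -/

theorem minimal_zero_of_rank_and_kernel {p : ℕ} (X : Matrix (Fin p) (Fin p) ℝ)
    (hX : X.IsSymm) (hcop : Copositive X) (Q : Finset (Fin p)) (hQ : Q.Nonempty)
    (hrank : (principalSub X Q).rank = Q.card - 1)
    (tbar : {k // k ∈ Q} → ℝ) (htpos : ∀ k, 0 < tbar k)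
    (htnorm : ∑ k, |tbar k| = 1)
    (htker : (principalSub X Q).mulVec tbar = 0) :
    IsMinimalZero X (fun k => if h : k ∈ Q then tbar ⟨k, h⟩ else 0) ∧
      ∑ k, |(fun k => if h : k ∈ Q then tbar ⟨k, h⟩ else 0) k| = 1 := by
  haveI : Nonempty {k // k ∈ Q} := ⟨⟨hQ.choose, hQ.choose_spec⟩⟩
  set A := principalSub X Q with hAdef
  set τ : Fin p → ℝ := fun k => if h : k ∈ Q then tbar ⟨k, h⟩ else 0 with hτ
  have hA : A.IsSymm := by
    unfold Matrix.IsSymm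
    rw [hAdef]
    unfold principalSub
    rw [Matrix.transpose_submatrix, hX.eq]
  have hAcop : ∀ s : {k // k ∈ Q} → ℝ, (∀ k, 0 ≤ s k) → 0 ≤ s ⬝ᵥ A.mulVec s := by
    intro s hs
    rw [hAdef, ← ext_eq_quad]
    refine hcop _ fun k => ?_
    by_cases h : k ∈ Q
    · simpa [dif_pos h] using hs ⟨k, h⟩
    · simp [dif_neg h]
  have hτnn : ∀ k, 0 ≤ τ k := by
    intro k
    rw [hτ]
    by_cases h : k ∈ Q
    · simpa [dif_pos h] using (htpos ⟨k, h⟩).le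
    · simp [dif_neg h]
  have hτne : τ ≠ 0 := by
    obtain ⟨k0, hk0⟩ := hQ
    intro h
    have := congrFun h k0
    rw [hτ] at this
    simp only [dif_pos hk0, Pi.zero_apply] at this
    exact (htpos ⟨k0, hk0⟩).ne' this
  have hτq : τ ⬝ᵥ X.mulVec τ = 0 := by
    rw [hτ, ext_eq_quad, ← hAdef, htker, dotProduct_zero]
  have hsupp : supp τ = ↑Q := by
    ext k
    simp only [supp, Set.mem_setOf_eq, Finset.mem_coe, hτ]
    constructor
    · intro hk
      by_contra h
      rw [dif_neg h] at hk
      exact lt_irrefl _ hk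
    · intro h
      rw [dif_pos h]
      exact htpos ⟨k, h⟩
  refine ⟨⟨⟨hτnn, hτne, hτq⟩, ?_⟩, ?_⟩
  · -- minimality
    rintro t ⟨htnn, htne, htq⟩ hss
    rw [hsupp] at hss
    have ht0 : ∀ k, k ∉ Q → t k = 0 := by
      intro k hk
      by_contra h
      have hk' : 0 < t k := lt_of_le_of_ne (htnn k) (Ne.symm h)
      exact hk (Finset.mem_coe.mp (hss.1 hk'))
    set s : {k // k ∈ Q} → ℝ := fun k => t k.1 with hs
    have hts : t = fun k => if h : k ∈ Q then s ⟨k, h⟩ else 0 := by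
      funext k
      by_cases h : k ∈ Q
      · simp [hs, dif_pos h]
      · simp [dif_neg h, ht0 k h]
    have hsq : s ⬝ᵥ A.mulVec s = 0 := by
      rw [hAdef, ← ext_eq_quad, ← hts]
      exact htq
    have hsnn : ∀ k, 0 ≤ s k := fun k => htnn k.1
    have hsne : s ≠ 0 := by
      intro h
      apply htne
      rw [hts]
      funext k
      by_cases hk : k ∈ Q <;> simp [h, dif_pos, dif_neg, hk]
    -- choose ε so that tbar - ε • s is strictly positive
    set M := Finset.univ.sup' Finset.univ_nonempty (fun k => |s k|) with hM
    have hM0 : 0 ≤ M := by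
      obtain ⟨k0⟩ := (inferInstance : Nonempty {k // k ∈ Q})
      refine le_trans (abs_nonneg (s k0)) ?_
      rw [hM]
      exact Finset.le_sup' (fun k => |s k|) (Finset.mem_univ k0)
    set m := Finset.univ.inf' Finset.univ_nonempty tbar with hm
    have hm0 : 0 < m := by
      rw [hm, Finset.lt_inf'_iff]
      exact fun k _ => htpos k
    set ε := m / (M + 1) with hε
    have hε0 : 0 < ε := div_pos hm0 (by linarith)
    have hεM : ε * (M + 1) = m := div_mul_cancel₀ m (by linarith)
    have hv : ∀ k, 0 < (tbar - ε • s) k := by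
      intro k
      have h1 : m ≤ tbar k := Finset.inf'_le _ (Finset.mem_univ k)
      have h2 : |s k| ≤ M := by rw [hM]; exact Finset.le_sup' (fun k => |s k|) (Finset.mem_univ k)
      have h3 : s k ≤ |s k| := le_abs_self _
      simp only [Pi.sub_apply, Pi.smul_apply, smul_eq_mul]
      nlinarith
    have htbar0 : tbar ⬝ᵥ A.mulVec tbar = 0 := by rw [htker, dotProduct_zero]
    have hsAt : s ⬝ᵥ A.mulVec tbar = 0 := by rw [htker, dotProduct_zero]
    have htAs : tbar ⬝ᵥ A.mulVec s = 0 := by rw [dot_mulVec_symm A hA, hsAt]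
    have hqv : (tbar - ε • s) ⬝ᵥ A.mulVec (tbar - ε • s) = 0 := by
      rw [Matrix.mulVec_sub, Matrix.mulVec_smul, dotProduct_sub, sub_dotProduct,
        sub_dotProduct, dotProduct_smul, dotProduct_smul, smul_dotProduct,
        smul_dotProduct, htbar0, hsAt, htAs, hsq]
      simp
    have hAv := interior_zero A hA hAcop _ hv hqv
    rw [Matrix.mulVec_sub, Matrix.mulVec_smul, htker, zero_sub, neg_eq_zero] at hAv
    have hAs : A.mulVec s = 0 := by
      rcases smul_eq_zero.mp hAv with h | h
      · exact absurd h hε0.ne'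
      · exact h
    -- kernel of A is one-dimensional and spanned by tbar
    have hcard : Fintype.card {k // k ∈ Q} = Q.card := Fintype.card_coe Q
    have hrn := LinearMap.finrank_range_add_finrank_ker (A.mulVecLin)
    rw [Module.finrank_fintype_fun_eq_card, hcard] at hrn
    have hker1 : Module.finrank ℝ (LinearMap.ker A.mulVecLin) = 1 := by
      have hQ1 : 1 ≤ Q.card := hQ.card_pos
      have hr : Module.finrank ℝ (LinearMap.range A.mulVecLin) = Q.card - 1 := hrank
      omega
    have htbar_ne : tbar ≠ 0 := by
      intro h
      obtain ⟨k0⟩ := (inferInstance : Nonempty {k // k ∈ Q})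
      have := htpos k0
      rw [h] at this
      exact lt_irrefl _ this
    have htbar_ker : tbar ∈ LinearMap.ker A.mulVecLin := by
      rw [LinearMap.mem_ker, Matrix.mulVecLin_apply, htker]
    have hspan : Submodule.span ℝ {tbar} = LinearMap.ker A.mulVecLin :=
      Submodule.eq_of_le_of_finrank_eq
        ((Submodule.span_singleton_le_iff_mem _ _).2 htbar_ker)
        (by rw [finrank_span_singleton htbar_ne, hker1])
    have hs_ker : s ∈ LinearMap.ker A.mulVecLin := by
      rw [LinearMap.mem_ker, Matrix.mulVecLin_apply, hAs]
    rw [← hspan] at hs_ker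
    obtain ⟨c, hc⟩ := Submodule.mem_span_singleton.mp hs_ker
    obtain ⟨k0⟩ := (inferInstance : Nonempty {k // k ∈ Q})
    have hck : ∀ k, c * tbar k = s k := by
      intro k
      have := congrFun hc k
      simpa using this
    have hcnn : 0 ≤ c := by nlinarith [hck k0, hsnn k0, htpos k0]
    have hc0 : 0 < c := by
      rcases hcnn.lt_or_eq with h | h
      · exact h
      · exfalso
        apply hsne
        funext k
        rw [Pi.zero_apply, ← hck k, ← h, zero_mul]
    have hspos : ∀ k, 0 < s k := fun k => by
      rw [← hck k]; exact mul_pos hc0 (htpos k)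
    exact hss.2 fun k hk => hspos ⟨k, Finset.mem_coe.mp hk⟩
  · -- normalization
    rw [hτ, sum_ext Q tbar (fun k x => |x|) (fun k => abs_zero)]
    exact htnorm
end

section
/- Let X be a copositive p×p matrix and let τ̄ be a minimal zero of X with support P̄ = supp(τ̄). Then rank(X(P̄)) = |P̄| − 1, and the restriction of τ̄ to P̄ is a strictly positive vector in the kernel of X(P̄). -/
open Matrix BigOperators

lemma symm_dot {p : ℕ} {X : Matrix (Fin p) (Fin p) ℝ} (hX : X.IsSymm) (v u : Fin p → ℝ) :
    v ⬝ᵥ X.mulVec u = u ⬝ᵥ X.mulVec v := by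
  rw [Matrix.dotProduct_mulVec, ← Matrix.mulVec_transpose, hX.eq, dotProduct_comm]

lemma grad_zero {p : ℕ} {X : Matrix (Fin p) (Fin p) ℝ} (hX : X.IsSymm)
    (hcop : Copositive X) {τ : Fin p → ℝ} (hnn : ∀ k, 0 ≤ τ k)
    (hz : τ ⬝ᵥ X.mulVec τ = 0) {i : Fin p} (hi : 0 < τ i) :
    X.mulVec τ i = 0 := by
  by_contra ha
  set a := X.mulVec τ i with ha'
  set c := X i i with hc'
  set m : ℝ := min (τ i) (|a| / (|c| + 1)) with hm'
  have hcpos : (0:ℝ) < |c| + 1 := by positivity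
  have hapos : 0 < |a| := abs_pos.mpr ha
  have hmpos : 0 < m := lt_min hi (by positivity)
  have hm1 : m ≤ τ i := min_le_left _ _
  have hm2 : m * (|c| + 1) ≤ |a| := by
    rw [← le_div_iff₀ hcpos]; exact min_le_right _ _
  set s : ℝ := if 0 < a then -m else m with hs'
  have hs_ge : -τ i ≤ s := by
    rw [hs']; split
    · linarith
    · linarith
  set t : Fin p → ℝ := τ + s • (Pi.single i 1 : Fin p → ℝ) with ht'
  have htnn : ∀ k, 0 ≤ t k := by
    intro k
    by_cases hk : k = i
    · subst hk; simp [ht']; linarith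
    · simp [ht', Pi.single_apply, hk, hnn k]
  have hq : t ⬝ᵥ X.mulVec t = 2 * s * a + s * s * c := by
    have e1 : (Pi.single i 1 : Fin p → ℝ) ⬝ᵥ X.mulVec τ = a := by simp [ha']
    have e2 : τ ⬝ᵥ X.mulVec (Pi.single i 1) = a := by
      rw [symm_dot hX]; exact e1
    have e3 : (Pi.single i 1 : Fin p → ℝ) ⬝ᵥ X.mulVec (Pi.single i 1) = c := by
      simp [Matrix.mulVec_single, hc']
    rw [ht']
    simp only [Matrix.mulVec_add, Matrix.mulVec_smul, dotProduct_add, add_dotProduct,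
      dotProduct_smul, smul_dotProduct, smul_eq_mul, hz, e1, e2, e3]
    ring
  have hqneg : t ⬝ᵥ X.mulVec t < 0 := by
    rw [hq, hs']
    rcases lt_or_gt_of_ne ha with hneg | hpos
    · rw [if_neg (by linarith)]
      have : |a| = -a := abs_of_neg hneg
      have habs : |c| ≥ c ∧ |c| ≥ -c := ⟨le_abs_self c, neg_le_abs c⟩
      nlinarith [hmpos, hm2, habs.1, habs.2]
    · rw [if_pos hpos]
      have : |a| = a := abs_of_pos hpos
      have habs : |c| ≥ c ∧ |c| ≥ -c := ⟨le_abs_self c, neg_le_abs c⟩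
      nlinarith [hmpos, hm2, habs.1, habs.2]
  exact absurd (hcop t htnn) (not_le.mpr hqneg)

lemma no_indep {p : ℕ} {X : Matrix (Fin p) (Fin p) ℝ}
    {τ : Fin p → ℝ} (hτ : IsMinimalZero X τ)
    {Q : Finset (Fin p)} (hQ : Q = Finset.univ.filter (fun k => 0 < τ k))
    (σ : {k // k ∈ Q} → ℝ) (hσ : σ = fun k => τ k.val)
    (hσker : (principalSub X Q).mulVec σ = 0)
    (w : {k // k ∈ Q} → ℝ)
    (hw : (principalSub X Q).mulVec w = 0)
    (hpos : ∃ i, 0 < w i)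
    (hns : w ∉ Submodule.span ℝ {σ}) : False := by
  have hσpos : ∀ k : {k // k ∈ Q}, 0 < σ k := by
    intro k
    have hk2 : (k : Fin p) ∈ Finset.univ.filter (fun j => 0 < τ j) := by
      rw [← hQ]; exact k.2
    rw [Finset.mem_filter] at hk2
    simpa [hσ] using hk2.2
  set S : Finset {k // k ∈ Q} := Finset.univ.filter (fun i => 0 < w i) with hS'
  have hS : S.Nonempty := by
    obtain ⟨i, hi⟩ := hpos
    exact ⟨i, by simp [hS', hi]⟩
  set s : ℝ := S.inf' hS (fun i => σ i / w i) with hs'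
  obtain ⟨i0, hi0S, hi0⟩ := Finset.exists_mem_eq_inf' hS (fun i => σ i / w i)
  have hwi0 : 0 < w i0 := by
    rw [hS', Finset.mem_filter] at hi0S; exact hi0S.2
  have hseq : s = σ i0 / w i0 := by rw [hs', hi0]
  have hspos : 0 < s := by
    rw [hseq]; exact div_pos (hσpos i0) hwi0
  set τ' : {k // k ∈ Q} → ℝ := σ - s • w with hτ''
  have hτ'def : ∀ i, τ' i = σ i - s * w i := fun i => rfl
  have hτ'nn : ∀ i, 0 ≤ τ' i := by
    intro i
    rw [hτ'def]
    by_cases hwi : 0 < w i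
    · have hle : s ≤ σ i / w i := Finset.inf'_le _ (by simp [hS', hwi])
      have := (le_div_iff₀ hwi).mp hle
      linarith
    · push_neg at hwi
      nlinarith [hσpos i]
  have hτ'i0 : τ' i0 = 0 := by
    rw [hτ'def, hseq, div_mul_cancel₀ _ (ne_of_gt hwi0), sub_self]
  have hτ'ker : (principalSub X Q).mulVec τ' = 0 := by
    rw [hτ'', Matrix.mulVec_sub, Matrix.mulVec_smul, hσker, hw]
    simp
  have hτ'ne : τ' ≠ 0 := by
    intro h
    apply hns
    have hσw : σ = s • w := by
      have := sub_eq_zero.mp h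
      simpa [hτ''] using this
    have : w = s⁻¹ • σ := by
      rw [hσw, smul_smul, inv_mul_cancel₀ (ne_of_gt hspos), one_smul]
    rw [this]
    exact Submodule.smul_mem _ _ (Submodule.mem_span_singleton_self σ)
  -- extend by zero
  set t : Fin p → ℝ := fun k => if h : k ∈ Q then τ' ⟨k, h⟩ else 0 with ht'
  have htQ : ∀ (k : {k // k ∈ Q}), t k = τ' k := by
    intro k
    simp [ht', k.2]
  have htnn : ∀ k, 0 ≤ t k := by
    intro k
    rw [ht']
    by_cases h : k ∈ Q
    · simp [h, hτ'nn]
    · simp [h]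
  have htne : t ≠ 0 := by
    obtain ⟨i1, hi1⟩ := Function.ne_iff.mp hτ'ne
    intro h
    apply hi1
    have := congrFun h (i1 : Fin p)
    rwa [htQ i1] at this
  have hkey : ∀ k ∈ Q, X.mulVec t k = 0 := by
    intro k hk
    have h1 : X.mulVec t k = ∑ j : Fin p, X k j * t j := rfl
    have h2 : ∑ j : Fin p, X k j * t j = ∑ j ∈ Q, X k j * t j := by
      symm
      apply Finset.sum_subset (Finset.subset_univ Q)
      intro j _ hj
      simp [ht', hj]
    have h3 : ∑ j ∈ Q, X k j * t j = ∑ j ∈ Q.attach, X k j * t j := by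
      rw [Finset.sum_attach Q (fun j => X k j * t j)]
    have h4 : ∑ j ∈ Q.attach, X k j * t j = ∑ j ∈ Q.attach, principalSub X Q ⟨k, hk⟩ j * τ' j := by
      apply Finset.sum_congr rfl
      intro j _
      rw [htQ j]
      rfl
    have h5 : (principalSub X Q).mulVec τ' ⟨k, hk⟩ = ∑ j ∈ Q.attach, principalSub X Q ⟨k, hk⟩ j * τ' j := by
      rw [← Finset.univ_eq_attach]; rfl
    rw [h1, h2, h3, h4, ← h5, hτ'ker]
    rfl
  have hquad : t ⬝ᵥ X.mulVec t = 0 := by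
    apply Finset.sum_eq_zero
    intro k _
    by_cases h : k ∈ Q
    · rw [hkey k h, mul_zero]
    · have : t k = 0 := by simp [ht', h]
      rw [this, zero_mul]
  have hzero : IsZeroOf X t := ⟨htnn, htne, hquad⟩
  apply hτ.2 t hzero
  constructor
  · intro k hk
    have hkQ : k ∈ Q := by
      by_contra h
      have : t k = 0 := by simp [ht', h]
      simp [supp, this] at hk
    have := hσpos ⟨k, hkQ⟩
    rw [hσ] at this
    exact this
  · intro hsub
    have h1 : (i0 : Fin p) ∈ supp τ := by
      have := hσpos i0
      rw [hσ] at this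
      exact this
    have h2 := hsub h1
    rw [supp, Set.mem_setOf_eq] at h2
    rw [htQ i0, hτ'i0] at h2
    exact lt_irrefl 0 h2

theorem support_of_minimal_zero {p : ℕ} (X : Matrix (Fin p) (Fin p) ℝ)
    (hX : X.IsSymm) (hcop : Copositive X) (τ : Fin p → ℝ)
    (hτ : IsMinimalZero X τ)
    (Q : Finset (Fin p)) (hQ : Q = Finset.univ.filter (fun k => 0 < τ k)) :
    (principalSub X Q).rank = Q.card - 1 ∧
      (∀ k : {k // k ∈ Q}, 0 < τ k) ∧
      (principalSub X Q).mulVec (fun k : {k // k ∈ Q} => τ k) = 0 := by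
  obtain ⟨⟨hnn, hne, hz⟩, hmin⟩ := hτ
  set σ : {k // k ∈ Q} → ℝ := fun k => τ k.val with hσ'
  have hσpos : ∀ k : {k // k ∈ Q}, 0 < τ (k : Fin p) := by
    intro k
    have hk2 : (k : Fin p) ∈ Finset.univ.filter (fun j => 0 < τ j) := by
      rw [← hQ]; exact k.2
    rw [Finset.mem_filter] at hk2
    exact hk2.2
  have hτoff : ∀ j ∉ Q, τ j = 0 := by
    intro j hj
    rw [hQ, Finset.mem_filter] at hj
    push_neg at hj
    exact le_antisymm (hj (Finset.mem_univ j)) (hnn j)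
  have hgrad : ∀ k ∈ Q, X.mulVec τ k = 0 := by
    intro k hk
    rw [hQ, Finset.mem_filter] at hk
    exact grad_zero hX hcop hnn hz hk.2
  have hσker : (principalSub X Q).mulVec σ = 0 := by
    funext i
    have h1 : (principalSub X Q).mulVec σ i = ∑ j ∈ Q.attach, X i j * τ j := by
      rw [Matrix.mulVec, dotProduct, ← Finset.univ_eq_attach]
      rfl
    have h2 : ∑ j ∈ Q.attach, X i j * τ j = ∑ j ∈ Q, X i j * τ j :=
      Finset.sum_attach Q (fun j => X i j * τ j)
    have h3 : ∑ j ∈ Q, X i j * τ j = ∑ j : Fin p, X i j * τ j := by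
      apply Finset.sum_subset (Finset.subset_univ Q)
      intro j _ hj
      rw [hτoff j hj, mul_zero]
    rw [h1, h2, h3]
    exact hgrad i i.2
  have hσne : σ ≠ 0 := by
    obtain ⟨i, hi⟩ := Function.ne_iff.mp hne
    have hipos : 0 < τ i := lt_of_le_of_ne (hnn i) (Ne.symm hi)
    have hiQ : i ∈ Q := by rw [hQ, Finset.mem_filter]; exact ⟨Finset.mem_univ i, hipos⟩
    intro h
    have := congrFun h ⟨i, hiQ⟩
    simp [hσ'] at this
    exact hi this
  -- kernel = span of σ
  have hker : LinearMap.ker (principalSub X Q).mulVecLin = Submodule.span ℝ {σ} := by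
    apply le_antisymm
    · intro w hw
      rw [LinearMap.mem_ker, Matrix.mulVecLin_apply] at hw
      by_contra hns
      by_cases hp : ∃ i, 0 < w i
      · exact no_indep ⟨⟨hnn, hne, hz⟩, hmin⟩ hQ σ hσ' hσker w hw hp hns
      · push_neg at hp
        have hwne : w ≠ 0 := fun h => hns (h ▸ Submodule.zero_mem _)
        obtain ⟨i, hi⟩ := Function.ne_iff.mp hwne
        have hneg : w i < 0 := lt_of_le_of_ne (hp i) hi
        apply no_indep ⟨⟨hnn, hne, hz⟩, hmin⟩ hQ σ hσ' hσker (-w)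
        · rw [Matrix.mulVec_neg, hw, neg_zero]
        · exact ⟨i, by simpa using hneg⟩
        · intro h
          exact hns (by simpa using Submodule.neg_mem _ h)
    · rw [Submodule.span_singleton_le_iff_mem, LinearMap.mem_ker, Matrix.mulVecLin_apply]
      exact hσker
  have hkerdim : Module.finrank ℝ (LinearMap.ker (principalSub X Q).mulVecLin) = 1 := by
    rw [hker, finrank_span_singleton hσne]
  have hrn := LinearMap.finrank_range_add_finrank_ker (principalSub X Q).mulVecLin
  have hcard : Module.finrank ℝ ({k // k ∈ Q} → ℝ) = Q.card := by
    rw [Module.finrank_fintype_fun_eq_card, Fintype.card_coe]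
  have hrank : (principalSub X Q).rank + 1 = Q.card := by
    rw [Matrix.rank, ← hkerdim, ← hcard]
    exact hrn
  refine ⟨by omega, hσpos, hσker⟩
end

section
/- Let X be a copositive p×p matrix and P̄ ⊆ {1,…,p} a nonempty set such that X(P̄) has rank |P̄| − 1 and there exists t̄ > 0 with X(P̄)t̄ = 0. Then for every i ∈ P̄, the principal submatrix X(P̄∖{i}) is nonsingular, i.e. det X(P̄∖{i}) ≠ 0. -/
open Matrix BigOperators

/-!
Copositivity of `X(P̄)` together with `X(P̄) t̄ = 0` for `t̄ > 0` makes `X(P̄)` positive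
semidefinite: for any `y` and small `ε > 0` the vector `t̄ + ε y` is still nonnegative, and its
quadratic form is `ε² yᵀ X(P̄) y`. The rank condition says that the kernel is the line `ℝ t̄`.
A kernel vector `w` of `X(P̄∖{i})`, extended by zero, is isotropic for the semidefinite `X(P̄)`,
hence lies in its kernel, hence is a multiple of `t̄`; its `i`-th entry vanishes while `t̄ i > 0`,
so `w = 0`.
-/

open Filter Function Topology

namespace Function.Injective

variable {R m n : Type*} [CommSemiring R] [Fintype m] [Fintype n] {e : m → n}

lemma extend_zero_dotProduct (he : Injective e) (u : m → R) (v : n → R) :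
    extend e u 0 ⬝ᵥ v = u ⬝ᵥ (v ∘ e) := by
  refine (Fintype.sum_of_injective e he _ _ (fun j hj => ?_) (fun k => ?_)).symm
  · rw [extend_apply' _ _ _ fun ⟨k, hk⟩ => hj ⟨k, hk⟩, Pi.zero_apply, zero_mul]
  · rw [comp_apply, he.extend_apply]

lemma extend_zero_dotProduct_mulVec (he : Injective e) (A : Matrix n n R) (u w : m → R) :
    extend e u 0 ⬝ᵥ A *ᵥ extend e w 0 = u ⬝ᵥ A.submatrix e e *ᵥ w := by
  rw [he.extend_zero_dotProduct]
  congr 1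
  ext k
  rw [comp_apply, mulVec, dotProduct_comm, he.extend_zero_dotProduct, dotProduct_comm]
  rfl

end Function.Injective

lemma Copositive.principalSub_nonneg {p : ℕ} {X : Matrix (Fin p) (Fin p) ℝ} (hX : Copositive X)
    (Q : Finset (Fin p)) (t : {k // k ∈ Q} → ℝ) (ht : ∀ k, 0 ≤ t k) :
    0 ≤ t ⬝ᵥ principalSub X Q *ᵥ t := by
  rw [principalSub, ← Subtype.val_injective.extend_zero_dotProduct_mulVec]
  refine hX _ fun j => ?_
  by_cases hj : ∃ k : {k // k ∈ Q}, k.1 = j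
  · obtain ⟨k, rfl⟩ := hj
    rw [Subtype.val_injective.extend_apply]
    exact ht k
  · rw [extend_apply' _ _ _ hj, Pi.zero_apply]

section

variable {n : Type*} [Fintype n]

lemma Matrix.posSemidef_of_copositive_of_mulVec_eq_zero {A : Matrix n n ℝ} (hA : A.IsSymm)
    (hnonneg : ∀ t : n → ℝ, (∀ k, 0 ≤ t k) → 0 ≤ t ⬝ᵥ A *ᵥ t)
    {t : n → ℝ} (ht : ∀ k, 0 < t k) (hAt : A *ᵥ t = 0) : A.PosSemidef := by
  rw [posSemidef_iff_dotProduct_mulVec]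
  refine ⟨by rw [IsHermitian, conjTranspose_eq_transpose_of_trivial, hA.eq], fun y => ?_⟩
  have hquad (s : ℝ) : (t + s • y) ⬝ᵥ A *ᵥ (t + s • y) = s ^ 2 * (y ⬝ᵥ A *ᵥ y) := by
    have htA : t ⬝ᵥ A *ᵥ y = 0 := by
      rw [dotProduct_mulVec, ← hA.eq, vecMul_transpose, hAt, zero_dotProduct]
    simp only [mulVec_add, mulVec_smul, hAt, add_dotProduct, dotProduct_add, dotProduct_smul,
      smul_dotProduct, htA, dotProduct_zero, smul_eq_mul]
    ring
  have hsmall : ∀ᶠ s in 𝓝[>] (0 : ℝ), ∀ k, 0 ≤ (t + s • y) k := by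
    refine eventually_all.2 fun k => ?_
    have hlim : Tendsto (fun s : ℝ => t k + s * y k) (𝓝 0) (𝓝 (t k)) := by
      have hcont : Continuous fun s : ℝ => t k + s * y k := by fun_prop
      simpa using hcont.tendsto 0
    filter_upwards [nhdsWithin_le_nhds (hlim.eventually (Ioi_mem_nhds (ht k)))] with s hs
    exact le_of_lt hs
  obtain ⟨s, hs, hspos⟩ := (hsmall.and self_mem_nhdsWithin).exists
  have := hnonneg _ hs
  rw [hquad] at this
  simpa using nonneg_of_mul_nonneg_right this (pow_pos hspos 2)

lemma Matrix.exists_smul_eq_of_rank_eq_card_sub_one {K : Type*} [Field K] {A : Matrix n n K}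
    (hrank : A.rank = Fintype.card n - 1) {v : n → K} (hv : v ≠ 0) (hAv : A *ᵥ v = 0)
    {w : n → K} (hAw : A *ᵥ w = 0) : ∃ c : K, c • v = w := by
  have hcard : 0 < Fintype.card n := by
    obtain ⟨k, -⟩ := Function.ne_iff.1 hv
    exact Fintype.card_pos_iff.2 ⟨k⟩
  have hker : Module.finrank K (LinearMap.ker A.mulVecLin) = 1 := by
    have := LinearMap.finrank_range_add_finrank_ker A.mulVecLin
    rw [Module.finrank_fintype_fun_eq_card] at this
    change A.rank + _ = _ at this
    omega
  obtain ⟨c, hc⟩ := (finrank_eq_one_iff_of_nonzero' (⟨v, hAv⟩ : LinearMap.ker A.mulVecLin)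
    fun h => hv (congrArg Subtype.val h)).1 hker ⟨w, hAw⟩
  exact ⟨c, congrArg Subtype.val hc⟩

lemma Matrix.PosSemidef.det_submatrix_ne_zero {m : Type*} [Fintype m] [DecidableEq m]
    {A : Matrix n n ℝ} (hA : A.PosSemidef) {t : n → ℝ}
    (hker : ∀ w, A *ᵥ w = 0 → ∃ c : ℝ, c • t = w) {i : n} (hti : t i ≠ 0)
    {e : m → n} (he : Injective e) (hi : i ∉ Set.range e) : (A.submatrix e e).det ≠ 0 := by
  intro hdet
  obtain ⟨w, hw, hAw⟩ := exists_mulVec_eq_zero_iff.2 hdet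
  have hx : A *ᵥ extend e w 0 = 0 := by
    refine (hA.dotProduct_mulVec_zero_iff _).1 ?_
    rw [star_trivial, he.extend_zero_dotProduct_mulVec, hAw, dotProduct_zero]
  obtain ⟨c, hc⟩ := hker _ hx
  have hc0 : c = 0 := by
    have := congrFun hc i
    rw [extend_apply' _ _ _ hi, Pi.smul_apply, smul_eq_mul, Pi.zero_apply] at this
    exact (mul_eq_zero.1 this).resolve_right hti
  refine hw (funext fun k => ?_)
  rw [← he.extend_apply w 0 k, ← hc, hc0, zero_smul, Pi.zero_apply, Pi.zero_apply]

end

theorem det_erase_ne_zero_general {p : ℕ} (X : Matrix (Fin p) (Fin p) ℝ)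
    (hX : X.IsSymm) (hcop : Copositive X) (Q : Finset (Fin p))
    (hrank : (principalSub X Q).rank = Q.card - 1)
    (tbar : {k // k ∈ Q} → ℝ) (htpos : ∀ k, 0 < tbar k)
    (htker : (principalSub X Q).mulVec tbar = 0) :
    ∀ i ∈ Q, (principalSub X (Q.erase i)).det ≠ 0 := by
  intro i hi
  have hpsd : (principalSub X Q).PosSemidef :=
    posSemidef_of_copositive_of_mulVec_eq_zero (hX.submatrix _) (hcop.principalSub_nonneg Q)
      htpos htker
  have htne : tbar ≠ 0 := fun h => (htpos ⟨i, hi⟩).ne' (congrFun h _)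
  have hrank' : (principalSub X Q).rank = Fintype.card {k // k ∈ Q} - 1 := by
    rw [Fintype.card_coe, hrank]
  let incl : {k // k ∈ Q.erase i} → {k // k ∈ Q} := fun k => ⟨k, Finset.mem_of_mem_erase k.2⟩
  have hincl : Injective incl := fun k l h => Subtype.ext (congrArg (fun x : {k // k ∈ Q} => (x : Fin p)) h)
  have hi_notin : (⟨i, hi⟩ : {k // k ∈ Q}) ∉ Set.range incl := by
    rintro ⟨k, hk⟩
    exact Finset.ne_of_mem_erase k.2 (Subtype.ext_iff.1 hk)
  exact hpsd.det_submatrix_ne_zero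
    (fun w hw => exists_smul_eq_of_rank_eq_card_sub_one hrank' htne htker hw)
    (htpos ⟨i, hi⟩).ne' hincl hi_notin

theorem det_erase_ne_zero {p : ℕ} (X : Matrix (Fin p) (Fin p) ℝ)
    (hX : X.IsSymm) (hcop : Copositive X) (Q : Finset (Fin p)) (hQ : Q.Nonempty)
    (hrank : (principalSub X Q).rank = Q.card - 1)
    (tbar : {k // k ∈ Q} → ℝ) (htpos : ∀ k, 0 < tbar k)
    (htker : (principalSub X Q).mulVec tbar = 0) :
    ∀ i ∈ Q, (principalSub X (Q.erase i)).det ≠ 0 :=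
  det_erase_ne_zero_general X hX hcop Q hrank tbar htpos htker
end

section
/- Let X be a copositive matrix and let P̄ ⊆ {1,…,p} be a nonempty set such that X(P̄) has rank |P̄| − 1 and its kernel is spanned by a strictly positive vector. Then X(P̄) is positive semidefinite. -/
/-! If `A *ᵥ t = 0` for a strictly positive `t`, then for any `v` the vector `t + ε • v` is
still nonnegative for small `ε > 0`, and by symmetry of `A` its quadratic form is `ε ^ 2` times that
of `v`. Copositivity therefore makes the quadratic form nonnegative everywhere. -/

open Matrix BigOperators

open Filter Topology Function

lemma extend_zero_dotProduct {m n R : Type*} [Fintype m] [Fintype n] [NonUnitalNonAssocSemiring R]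
    {e : m → n} (he : Injective e) (t : m → R) (w : n → R) :
    extend e t 0 ⬝ᵥ w = t ⬝ᵥ (w ∘ e) :=
  (Fintype.sum_of_injective e he _ _ (fun j hj => by simp [extend_apply' _ _ _ hj])
    (fun i => by simp [he.extend_apply])).symm

lemma dotProduct_submatrix_mulVec {m n R : Type*} [Fintype m] [Fintype n] [CommSemiring R]
    (X : Matrix n n R) {e : m → n} (he : Injective e) (t : m → R) :
    t ⬝ᵥ X.submatrix e e *ᵥ t = extend e t 0 ⬝ᵥ X *ᵥ extend e t 0 := by
  have hmulVec : (X *ᵥ extend e t 0) ∘ e = X.submatrix e e *ᵥ t := by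
    ext i
    rw [Function.comp_apply, mulVec, dotProduct_comm, extend_zero_dotProduct he, dotProduct_comm]
    rfl
  rw [extend_zero_dotProduct he, hmulVec]

lemma Copositive.principalSub {p : ℕ} {X : Matrix (Fin p) (Fin p) ℝ} (hX : Copositive X)
    (Q : Finset (Fin p)) (t : Q → ℝ) (ht : ∀ k, 0 ≤ t k) :
    0 ≤ t ⬝ᵥ principalSub X Q *ᵥ t := by
  rw [_root_.principalSub, dotProduct_submatrix_mulVec X Subtype.val_injective]
  refine hX _ fun i => ?_
  by_cases hi : i ∈ Set.range ((↑) : Q → Fin p)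
  · obtain ⟨k, rfl⟩ := hi
    rw [Subtype.val_injective.extend_apply]
    exact ht k
  · rw [extend_apply' _ _ _ hi]
    rfl

lemma exists_pos_add_smul_nonneg {n : Type*} [Finite n] {t : n → ℝ} (ht : ∀ k, 0 < t k)
    (v : n → ℝ) : ∃ ε > 0, ∀ k, 0 ≤ t k + ε * v k := by
  have hnear : ∀ᶠ ε in 𝓝 (0 : ℝ), ∀ k, 0 < t k + ε * v k := by
    refine eventually_all.2 fun k => ?_
    have hcont : Continuous fun ε : ℝ => t k + ε * v k := by fun_prop
    exact continuousAt_const.eventually_lt hcont.continuousAt (by simpa using ht k)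
  obtain ⟨ε, hε, hpos⟩ := ((hnear.filter_mono nhdsWithin_le_nhds).and
    (self_mem_nhdsWithin (s := Set.Ioi (0 : ℝ)))).exists
  exact ⟨ε, hpos, fun k => (hε k).le⟩

theorem Matrix.posSemidef_of_copositive_of_pos_mulVec_eq_zero {n : Type*} [Fintype n]
    {A : Matrix n n ℝ} (hA : A.IsSymm)
    (hcop : ∀ t : n → ℝ, (∀ k, 0 ≤ t k) → 0 ≤ t ⬝ᵥ A *ᵥ t)
    {t : n → ℝ} (ht : ∀ k, 0 < t k) (hAt : A *ᵥ t = 0) : A.PosSemidef := by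
  refine .of_dotProduct_mulVec_nonneg (by simpa [IsHermitian] using hA.eq) fun v => ?_
  obtain ⟨ε, hε, hnonneg⟩ := exists_pos_add_smul_nonneg ht v
  have htA : t ᵥ* A = 0 := by rw [← mulVec_transpose, hA, hAt]
  have hform : (t + ε • v) ⬝ᵥ A *ᵥ (t + ε • v) = ε ^ 2 * (v ⬝ᵥ A *ᵥ v) := by
    rw [mulVec_add, hAt, zero_add, mulVec_smul, add_dotProduct, dotProduct_smul,
      dotProduct_mulVec t, htA]
    simp only [zero_dotProduct, smul_dotProduct, dotProduct_smul, smul_eq_mul]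
    ring
  have := hcop (t + ε • v) (by simpa using hnonneg)
  rw [hform] at this
  simpa using nonneg_of_mul_nonneg_right this (by positivity)

theorem principalSub_posSemidef_general {p : ℕ} (X : Matrix (Fin p) (Fin p) ℝ)
    (hX : X.IsSymm) (hcop : Copositive X) (Q : Finset (Fin p))
    (tbar : {k // k ∈ Q} → ℝ) (htpos : ∀ k, 0 < tbar k)
    (htker : (principalSub X Q).mulVec tbar = 0) :
    (principalSub X Q).PosSemidef :=
  posSemidef_of_copositive_of_pos_mulVec_eq_zero (hX.submatrix _) (hcop.principalSub Q) htpos htker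

theorem principalSub_posSemidef {p : ℕ} (X : Matrix (Fin p) (Fin p) ℝ)
    (hX : X.IsSymm) (hcop : Copositive X) (Q : Finset (Fin p)) (hQ : Q.Nonempty)
    (hrank : (principalSub X Q).rank = Q.card - 1)
    (tbar : {k // k ∈ Q} → ℝ) (htpos : ∀ k, 0 < tbar k)
    (htker : (principalSub X Q).mulVec tbar = 0)
    (hspan : ∀ v : {k // k ∈ Q} → ℝ, (principalSub X Q).mulVec v = 0 → ∃ c : ℝ, v = c • tbar) :
    (principalSub X Q).PosSemidef :=
  principalSub_posSemidef_general X hX hcop Q tbar htpos htker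
end

section
/- Let X be a copositive matrix and let τ(j), j ∈ J(s), be zeros of X with pairwise τ(i)ᵀXτ(j) = 0. Set P* = ⋃_{j∈J(s)} supp(τ(j)). Then the principal submatrix X(P*) is positive semidefinite. -/
open Matrix BigOperators

/-!
Put `σ = ∑ⱼ τ(j)`. Pairwise orthogonality gives `σᵀXσ = 0`, and `σ > 0` on `P*`. For `y`
supported in `P*` some multiple `cσ` dominates `|y|`, so `cσ ± y ≥ 0` and copositivity makes both
`(cσ ± y)ᵀX(cσ ± y)` nonnegative; their sum is `2(c²σᵀXσ + yᵀXy) = 2yᵀXy`.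
-/

theorem Matrix.posSemidef_submatrix_of_support_subset {n R : Type*} [Fintype n] [CommRing R]
    [PartialOrder R] [StarRing R] {M : Matrix n n R} (hM : M.IsHermitian) (s : Finset n)
    (h : ∀ x : n → R, Function.support x ⊆ s → 0 ≤ star x ⬝ᵥ M *ᵥ x) :
    (M.submatrix ((↑) : s → n) (↑)).PosSemidef := by
  refine ⟨hM.submatrix _, fun x ↦ ?_⟩
  set y : n →₀ R := Finsupp.mapDomain (↑) x
  have hy : Function.support y ⊆ s := fun k hk ↦ by
    by_contra hks
    exact hk (Finsupp.mapDomain_of_notMem_range _ _ fun ⟨i, hi⟩ ↦ hks (hi ▸ i.2))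
  have hquad : star ⇑y ⬝ᵥ M *ᵥ ⇑y = y.sum fun i yi ↦ y.sum fun j yj ↦ star yi * M i j * yj := by
    simp [dotProduct, mulVec, Finsupp.sum_fintype, Finset.mul_sum, mul_assoc]
  simpa [hquad, y, Finsupp.sum_mapDomain_index, add_mul, mul_add] using h y hy

theorem Matrix.dotProduct_mulVec_parallelogram {n R : Type*} [Fintype n] [CommRing R]
    (M : Matrix n n R) (x y : n → R) :
    (x + y) ⬝ᵥ M *ᵥ (x + y) + (x - y) ⬝ᵥ M *ᵥ (x - y) = 2 * (x ⬝ᵥ M *ᵥ x + y ⬝ᵥ M *ᵥ y) := by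
  simp only [mulVec_add, mulVec_sub, dotProduct_add, dotProduct_sub, add_dotProduct,
    sub_dotProduct]
  ring

theorem Matrix.sum_dotProduct_mulVec_sum_eq_zero {n ι R : Type*} [Fintype n] [Fintype ι]
    [CommRing R] (M : Matrix n n R) (v : ι → n → R) (h : ∀ i j, v i ⬝ᵥ M *ᵥ v j = 0) :
    (∑ i, v i) ⬝ᵥ M *ᵥ (∑ i, v i) = 0 := by
  simp [mulVec_sum, dotProduct_sum, sum_dotProduct, h]

theorem exists_abs_le_mul_of_support_subset {n : Type*} [Fintype n] {σ y : n → ℝ}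
    (hσ : ∀ k, 0 ≤ σ k) (hy : Function.support y ⊆ Function.support σ) :
    ∃ c, ∀ k, |y k| ≤ c * σ k := by
  refine ⟨∑ k, |y k| / σ k, fun k ↦ ?_⟩
  by_cases hσk : σ k = 0
  · simp [Function.notMem_support.mp fun hk ↦ hy hk hσk, hσk]
  · have hle : |y k| / σ k ≤ ∑ k, |y k| / σ k :=
      Finset.single_le_sum (fun j _ ↦ div_nonneg (abs_nonneg _) (hσ j)) (Finset.mem_univ k)
    rwa [div_le_iff₀ ((hσ k).lt_of_ne' hσk)] at hle

theorem Copositive.dotProduct_mulVec_nonneg_of_support_subset {p : ℕ}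
    {X : Matrix (Fin p) (Fin p) ℝ} (hcop : Copositive X) {σ y : Fin p → ℝ}
    (hσ : ∀ k, 0 ≤ σ k) (hσX : σ ⬝ᵥ X *ᵥ σ = 0)
    (hy : Function.support y ⊆ Function.support σ) : 0 ≤ y ⬝ᵥ X *ᵥ y := by
  obtain ⟨c, hyc⟩ := exists_abs_le_mul_of_support_subset hσ hy
  have hplus := hcop (c • σ + y) fun k ↦ by
    simp only [Pi.add_apply, Pi.smul_apply, smul_eq_mul]; linarith [neg_abs_le (y k), hyc k]
  have hminus := hcop (c • σ - y) fun k ↦ by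
    simp only [Pi.sub_apply, Pi.smul_apply, smul_eq_mul]; linarith [le_abs_self (y k), hyc k]
  have hcσ : (c • σ) ⬝ᵥ X *ᵥ (c • σ) = 0 := by
    simp [mulVec_smul, hσX]
  linarith [X.dotProduct_mulVec_parallelogram (c • σ) y]

theorem principalSub_union_supports_posSemidef_general {p : ℕ} {ι : Type*} [Fintype ι]
    (X : Matrix (Fin p) (Fin p) ℝ) (hX : X.IsSymm) (hcop : Copositive X)
    (τ : ι → Fin p → ℝ) (hτ : ∀ j, IsZeroOf X (τ j))
    (horth : ∀ i j, τ i ⬝ᵥ X.mulVec (τ j) = 0)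
    (Pstar : Finset (Fin p)) (hP : ∀ k, k ∈ Pstar ↔ ∃ j, 0 < τ j k) :
    (principalSub X Pstar).PosSemidef := by
  set σ := ∑ j, τ j
  have hτ0 (j : ι) (k : Fin p) : 0 ≤ τ j k := (hτ j).1 k
  have hσ (k : Fin p) : 0 ≤ σ k := by
    simpa [σ] using Finset.sum_nonneg fun j _ ↦ hτ0 j k
  have hσX : σ ⬝ᵥ X *ᵥ σ = 0 := X.sum_dotProduct_mulVec_sum_eq_zero τ horth
  have hPσ : (Pstar : Set (Fin p)) ⊆ Function.support σ := fun k hk ↦ by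
    obtain ⟨j, hj⟩ := (hP k).1 hk
    have : τ j k ≤ σ k := by
      simpa [σ] using Finset.single_le_sum (fun i _ ↦ hτ0 i k) (Finset.mem_univ j)
    exact (hj.trans_le this).ne'
  exact X.posSemidef_submatrix_of_support_subset (isHermitian_iff_isSelfAdjoint.mpr hX) Pstar
    fun y hy ↦ hcop.dotProduct_mulVec_nonneg_of_support_subset hσ hσX (hy.trans hPσ)

theorem principalSub_union_supports_posSemidef {p : ℕ} {ι : Type*} [Fintype ι] [Nonempty ι]
    (X : Matrix (Fin p) (Fin p) ℝ) (hX : X.IsSymm) (hcop : Copositive X)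
    (τ : ι → Fin p → ℝ) (hτ : ∀ j, IsZeroOf X (τ j))
    (horth : ∀ i j, τ i ⬝ᵥ X.mulVec (τ j) = 0)
    (Pstar : Finset (Fin p)) (hP : ∀ k, k ∈ Pstar ↔ ∃ j, 0 < τ j k) :
    (principalSub X Pstar).PosSemidef :=
  principalSub_union_supports_posSemidef_general X hX hcop τ hτ horth Pstar hP
end

section
/- Let X be copositive and let τ be a zero of X such that X(P)τ_P = 0 where P = supp(τ) (viewing τ_P as the restriction of τ to its support). Suppose τ is not minimal, i.e., there is a zero σ of X with supp(σ) strictly contained in supp(τ). Then σᵀXτ = 0 and there exists θ ∈ (0,1) such that τ − θσ ≥ 0 componentwise. -/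
open Matrix BigOperators

theorem nonminimal_zero_decomposition {p : ℕ} (X : Matrix (Fin p) (Fin p) ℝ)
    (hX : X.IsSymm) (hcop : Copositive X)
    (τ : Fin p → ℝ) (hτ : IsZeroOf X τ)
    (Q : Finset (Fin p)) (hQ : ∀ k, k ∈ Q ↔ 0 < τ k)
    (hker : (principalSub X Q).mulVec (fun k : {k // k ∈ Q} => τ k) = 0)
    (σ : Fin p → ℝ) (hσ : IsZeroOf X σ) (hstrict : supp σ ⊂ supp τ) :
    σ ⬝ᵥ X.mulVec τ = 0 ∧ ∃ θ ∈ Set.Ioo (0:ℝ) 1, ∀ k, 0 ≤ τ k - θ * σ k := by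
  obtain ⟨hτnn, hτne, hτ0⟩ := hτ
  obtain ⟨hσnn, hσne, hσ0⟩ := hσ
  have hsub : ∀ k, 0 < σ k → 0 < τ k := fun k hk => hstrict.1 hk
  have hτQ : ∀ k, k ∉ Q → τ k = 0 := by
    intro k hk
    by_contra h
    exact hk ((hQ k).2 (lt_of_le_of_ne (hτnn k) (Ne.symm h)))
  have hXτ : ∀ k ∈ Q, X.mulVec τ k = 0 := by
    intro k hk
    have h1 := congrFun hker ⟨k, hk⟩
    simp only [principalSub, mulVec, dotProduct, submatrix_apply, Pi.zero_apply] at h1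
    have h2 : ∑ j ∈ Q, X k j * τ j = 0 := by
      rw [← Finset.sum_attach Q (fun j => X k j * τ j)]
      exact h1
    show ∑ j, X k j * τ j = 0
    rw [← Finset.sum_subset (Finset.subset_univ Q)
      (fun j _ hj => by rw [hτQ j hj, mul_zero])]
    exact h2
  constructor
  · apply Finset.sum_eq_zero
    intro k _
    rcases (hσnn k).eq_or_lt with h | h
    · rw [← h, zero_mul]
    · rw [hXτ k ((hQ k).2 (hsub k h)), mul_zero]
  · obtain ⟨k0, _⟩ := Function.ne_iff.mp hτne
    haveI : Nonempty (Fin p) := ⟨k0⟩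
    set f : Fin p → ℝ := fun k => if 0 < σ k then τ k / σ k else 1 with hf
    have hfpos : ∀ k, 0 < f k := by
      intro k
      simp only [hf]
      split
      · exact div_pos (hsub k ‹_›) ‹_›
      · exact one_pos
    set m := Finset.univ.inf' Finset.univ_nonempty f with hm
    have hm0 : 0 < m := (Finset.lt_inf'_iff _).2 fun k _ => hfpos k
    refine ⟨min m (1/2), ⟨lt_min hm0 (by norm_num), (min_le_right _ _).trans_lt (by norm_num)⟩, ?_⟩
    intro k
    rcases (hσnn k).eq_or_lt with h | h
    · rw [← h, mul_zero, sub_zero]; exact hτnn k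
    · have hle : min m (1/2) ≤ τ k / σ k := by
        refine (min_le_left _ _).trans ?_
        have h2 : f k = τ k / σ k := by simp [hf, h]
        exact h2 ▸ Finset.inf'_le f (Finset.mem_univ k)
      have := (le_div_iff₀ h).mp hle
      linarith
end

section
/- Let X be a copositive matrix with zero set T₀ = {t : t ≥ 0, ‖t‖₁ = 1, tᵀXt = 0} nonempty, and suppose every element of T₀ is a convex combination of finitely many normalized minimal zeros τ(j), j ∈ J. Then every minimal zero τ(j₀) is an extreme point of conv(T₀). -/
open Matrix BigOperators

/-- The set of normalized zeros of `X`. -/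
def T0 {p : ℕ} (X : Matrix (Fin p) (Fin p) ℝ) : Set (Fin p → ℝ) :=
  {t | (∀ k, 0 ≤ t k) ∧ (∑ k, |t k| = 1) ∧ t ⬝ᵥ X.mulVec t = 0}

/-! Since every normalized zero is a convex combination of the `τ j`, `conv T₀` is the convex
hull of the `τ j`, and it suffices that `τ j₀ = ∑ w_j τ_j` (convex weights) forces `τ j = τ j₀`
whenever `w_j > 0`. Such a `τ j` has support inside that of `τ j₀`, hence equal support by
minimality. Two zeros `σ, τ` with the same support are proportional when `τ` is minimal: `Xσ ≥ 0`
vanishes on the support of `σ`, so the quadratic form vanishes on the span of `σ` and `τ`, and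
`τ - cσ` with `c` maximal subject to `τ - cσ ≥ 0` would otherwise be a zero of smaller support. -/

open Set

section ConvexHull

variable {𝕜 E ι : Type*} [AddCommGroup E] [Fintype ι] {v : ι → E}

theorem Fintype.linearCombination_eq_of_mem_stdSimplex [Semiring 𝕜] [PartialOrder 𝕜]
    [Module 𝕜 E] {w : ι → 𝕜} {x : E} (hw : w ∈ stdSimplex 𝕜 ι) (h : ∀ j, 0 < w j → v j = x) :
    Fintype.linearCombination 𝕜 v w = x := by
  have hterm : ∀ j, w j • v j = w j • x := fun j ↦ by
    rcases (hw.1 j).eq_or_lt with hj | hj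
    · simp [← hj]
    · rw [h j hj]
  rw [Fintype.linearCombination_apply, Finset.sum_congr rfl fun j _ ↦ hterm j,
    ← Finset.sum_smul, hw.2, one_smul]

variable [Field 𝕜] [LinearOrder 𝕜] [IsStrictOrderedRing 𝕜] [Module 𝕜 E]

theorem convexHull_range_eq_image_stdSimplex :
    convexHull 𝕜 (range v) = Fintype.linearCombination 𝕜 v '' stdSimplex 𝕜 ι := by
  classical
  rw [← convexHull_rangle_single_eq_stdSimplex, LinearMap.image_convexHull, ← range_comp]
  congr 2
  ext i
  simp

theorem mem_extremePoints_convexHull_range (j₀ : ι)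
    (h : ∀ w ∈ stdSimplex 𝕜 ι, Fintype.linearCombination 𝕜 v w = v j₀ →
      ∀ j, 0 < w j → v j = v j₀) :
    v j₀ ∈ (convexHull 𝕜 (range v)).extremePoints 𝕜 := by
  classical
  rw [convexHull_range_eq_image_stdSimplex]
  refine ⟨⟨Pi.single j₀ 1, single_mem_stdSimplex 𝕜 j₀, by simp⟩, ?_⟩
  rintro _ ⟨c, hc, rfl⟩ _ ⟨c', hc', rfl⟩ ⟨a, b, ha, hb, hab, hx⟩
  have hw : a • c + b • c' ∈ stdSimplex 𝕜 ι := convex_stdSimplex 𝕜 ι hc hc' ha.le hb.le hab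
  have hvw : Fintype.linearCombination 𝕜 v (a • c + b • c') = v j₀ := by
    rwa [map_add, map_smul, map_smul]
  refine Fintype.linearCombination_eq_of_mem_stdSimplex hc fun j hj ↦ h _ hw hvw j ?_
  exact add_pos_of_pos_of_nonneg (mul_pos ha hj) (mul_nonneg hb.le (hc'.1 j))

end ConvexHull

theorem nonneg_of_forall_pos_mul_add_sq_mul_nonneg {a b : ℝ}
    (h : ∀ ε > 0, 0 ≤ ε * a + ε ^ 2 * b) : 0 ≤ a := by
  by_contra! ha
  set ε := -a / (|b| + 1)
  have hε : 0 < ε := div_pos (neg_pos.2 ha) (by positivity)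
  have hεb : ε * (|b| + 1) = -a := div_mul_cancel₀ _ (by positivity)
  have hlin : 0 ≤ a + ε * b := by
    have := h ε hε
    nlinarith
  nlinarith [le_abs_self b]

theorem supp_subset_supp_sum_smul {ι : Type*} [Fintype ι] {p : ℕ} (v : ι → Fin p → ℝ)
    {w : ι → ℝ} (hw : ∀ j, 0 ≤ w j) (hv : ∀ j k, 0 ≤ v j k) {j : ι} (hj : 0 < w j) :
    supp (v j) ⊆ supp (∑ i, w i • v i) := fun k hk ↦ by
  change 0 < (∑ i, w i • v i) k
  simp only [Finset.sum_apply, Pi.smul_apply, smul_eq_mul]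
  exact (mul_pos hj hk).trans_le <| Finset.single_le_sum
    (fun i _ ↦ mul_nonneg (hw i) (hv i k)) (Finset.mem_univ j)

/-- Decrease `τ` along `σ` until a coordinate of the support of `σ` hits zero. -/
theorem exists_nonneg_sub_smul_supp_ssubset {p : ℕ} {σ τ : Fin p → ℝ}
    (hσ : ∀ k, 0 ≤ σ k) (hτ : ∀ k, 0 ≤ τ k) (hσ0 : σ ≠ 0) (hsub : supp σ ⊆ supp τ) :
    ∃ c : ℝ, (∀ k, 0 ≤ (τ - c • σ) k) ∧ supp (τ - c • σ) ⊂ supp τ := by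
  classical
  obtain ⟨k, hk⟩ := Function.ne_iff.1 hσ0
  have hs : (Finset.univ.filter fun k ↦ 0 < σ k).Nonempty :=
    ⟨k, by simpa using (hσ k).lt_of_ne' hk⟩
  obtain ⟨k₀, hk₀, hmin⟩ := Finset.exists_min_image _ (fun k ↦ τ k / σ k) hs
  simp only [Finset.mem_filter, Finset.mem_univ, true_and] at hk₀ hmin
  have hc : 0 ≤ τ k₀ / σ k₀ := div_nonneg (hτ k₀) (hσ k₀)
  have hle : ∀ k, (τ k₀ / σ k₀) * σ k ≤ τ k := fun k ↦ by
    rcases (hσ k).eq_or_lt with hk | hk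
    · simp [← hk, hτ k]
    · exact (le_div_iff₀ hk).1 (hmin k hk)
  refine ⟨τ k₀ / σ k₀, fun k ↦ by simpa using hle k, ?_⟩
  refine (ssubset_iff_of_subset fun k hk ↦ ?_).2 ⟨k₀, hsub hk₀, ?_⟩
  · change 0 < τ k - τ k₀ / σ k₀ * σ k at hk
    change 0 < τ k
    linarith [mul_nonneg hc (hσ k)]
  · simp [supp, div_mul_cancel₀ _ hk₀.ne']

section Bilinear

variable {n R : Type*} [Fintype n] [CommRing R] {X : Matrix n n R}

theorem Matrix.IsSymm.dotProduct_mulVec_comm (hX : X.IsSymm) (u v : n → R) :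
    u ⬝ᵥ X *ᵥ v = v ⬝ᵥ X *ᵥ u := by
  simpa only [hX.eq] using dotProduct_transpose_mulVec X u v

theorem dotProduct_mulVec_add_smul (x y : n → R) (c : R) :
    (x + c • y) ⬝ᵥ X *ᵥ (x + c • y) =
      x ⬝ᵥ X *ᵥ x + c * (x ⬝ᵥ X *ᵥ y + y ⬝ᵥ X *ᵥ x) + c ^ 2 * (y ⬝ᵥ X *ᵥ y) := by
  simp only [mulVec_add, mulVec_smul, dotProduct_add, add_dotProduct, dotProduct_smul,
    smul_dotProduct, smul_eq_mul]
  ring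

end Bilinear

section Zeros

variable {p : ℕ} {X : Matrix (Fin p) (Fin p) ℝ}

/-- First-order optimality of the zero `σ` of the quadratic form on the nonnegative orthant. -/
theorem Copositive.dotProduct_mulVec_nonneg_of_zero (hX : X.IsSymm) (hcop : Copositive X)
    {σ u : Fin p → ℝ} (hσ : ∀ k, 0 ≤ σ k) (hσX : σ ⬝ᵥ X *ᵥ σ = 0) (hu : ∀ k, 0 ≤ u k) :
    0 ≤ σ ⬝ᵥ X *ᵥ u := by
  refine nonneg_of_forall_pos_mul_add_sq_mul_nonneg (b := u ⬝ᵥ X *ᵥ u / 2) fun ε hε ↦ ?_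
  have := hcop (σ + ε • u) fun k ↦ add_nonneg (hσ k) (mul_nonneg hε.le (hu k))
  rw [dotProduct_mulVec_add_smul, hσX, hX.dotProduct_mulVec_comm u σ] at this
  linarith

/-- `σᵀX ≥ 0` and `σᵀXσ = 0` force `σᵀX` to vanish on the support of `σ`. -/
theorem Copositive.dotProduct_mulVec_eq_zero_of_supp_subset (hX : X.IsSymm)
    (hcop : Copositive X) {σ u : Fin p → ℝ} (hσ : ∀ k, 0 ≤ σ k) (hσX : σ ⬝ᵥ X *ᵥ σ = 0)
    (hu : ∀ k, 0 ≤ u k) (hsub : supp u ⊆ supp σ) : σ ⬝ᵥ X *ᵥ u = 0 := by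
  classical
  set g := σ ᵥ* X
  have hg : ∀ k, 0 ≤ g k := fun k ↦ by
    simpa only [dotProduct_mulVec, dotProduct_single, mul_one] using
      hcop.dotProduct_mulVec_nonneg_of_zero hX hσ hσX (u := Pi.single k 1)
        fun i ↦ by by_cases h : i = k <;> simp [h]
  have hgσ : ∀ k, g k * σ k = 0 := by
    rw [dotProduct_mulVec] at hσX
    exact fun k ↦ (Finset.sum_eq_zero_iff_of_nonneg fun i _ ↦ mul_nonneg (hg i) (hσ i)).1
      hσX k (Finset.mem_univ k)
  rw [dotProduct_mulVec]
  refine Finset.sum_eq_zero fun k _ ↦ ?_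
  rcases (hu k).eq_or_lt with hk | hk
  · simp [← hk]
  · exact mul_eq_zero_of_left ((mul_eq_zero.1 (hgσ k)).resolve_right (hsub hk).ne') _

theorem IsMinimalZero.eq_smul_of_supp_eq (hX : X.IsSymm) (hcop : Copositive X)
    {σ τ : Fin p → ℝ} (hτ : IsMinimalZero X τ) (hσ : IsZeroOf X σ) (hs : supp σ = supp τ) :
    ∃ c : ℝ, τ = c • σ := by
  obtain ⟨hσ_nonneg, hσ0, hσX⟩ := hσ
  obtain ⟨⟨hτ_nonneg, -, hτX⟩, hτ_min⟩ := hτ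
  obtain ⟨c, hu_nonneg, hu_supp⟩ :=
    exists_nonneg_sub_smul_supp_ssubset hσ_nonneg hτ_nonneg hσ0 hs.subset
  have hστ : σ ⬝ᵥ X *ᵥ τ = 0 :=
    hcop.dotProduct_mulVec_eq_zero_of_supp_subset hX hσ_nonneg hσX hτ_nonneg hs.symm.subset
  have hu : (τ - c • σ) ⬝ᵥ X *ᵥ (τ - c • σ) = 0 := by
    rw [sub_eq_add_neg, ← neg_smul, dotProduct_mulVec_add_smul, hX.dotProduct_mulVec_comm τ σ,
      hστ, hσX, hτX]
    ring
  refine ⟨c, sub_eq_zero.1 ?_⟩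
  by_contra hne
  exact hτ_min _ ⟨hu_nonneg, hne, hu⟩ hu_supp

theorem IsMinimalZero.eq_of_supp_eq (hX : X.IsSymm) (hcop : Copositive X)
    {σ τ : Fin p → ℝ} (hτ : IsMinimalZero X τ) (hσ : IsZeroOf X σ)
    (hσ1 : ∑ k, σ k = 1) (hτ1 : ∑ k, τ k = 1) (hs : supp σ = supp τ) : σ = τ := by
  obtain ⟨c, rfl⟩ := hτ.eq_smul_of_supp_eq hX hcop hσ hs
  have hc : c = 1 := by
    simpa only [Pi.smul_apply, smul_eq_mul, ← Finset.mul_sum, hσ1, mul_one] using hτ1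
  rw [hc, one_smul]

theorem sum_eq_one_of_mem_T0 {t : Fin p → ℝ} (ht : t ∈ T0 X) : ∑ k, t k = 1 := by
  rw [← ht.2.1]
  exact Finset.sum_congr rfl fun k _ ↦ (abs_of_nonneg (ht.1 k)).symm

end Zeros

theorem minimal_zeros_are_extreme_points_general {p : ℕ} {ι : Type*} [Fintype ι]
    (X : Matrix (Fin p) (Fin p) ℝ) (hX : X.IsSymm) (hcop : Copositive X)
    (τ : ι → Fin p → ℝ)
    (hτ : ∀ j, IsMinimalZero X (τ j) ∧ τ j ∈ T0 X)
    (hdecomp : ∀ t ∈ T0 X, ∃ α : ι → ℝ,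
      (∀ j, 0 ≤ α j) ∧ (∑ j, α j = 1) ∧ t = ∑ j, α j • τ j) :
    ∀ j₀ : ι, τ j₀ ∈ Set.extremePoints ℝ (convexHull ℝ (T0 X)) := by
  intro j₀
  have hhull : convexHull ℝ (T0 X) = convexHull ℝ (range τ) := by
    refine (convexHull_min (fun t ht ↦ ?_) (convex_convexHull ℝ _)).antisymm
      (convexHull_mono (range_subset_iff.2 fun j ↦ (hτ j).2))
    obtain ⟨α, hα, hα1, rfl⟩ := hdecomp t ht
    exact (convex_convexHull ℝ _).sum_mem (fun j _ ↦ hα j) hα1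
      fun j _ ↦ subset_convexHull ℝ _ (mem_range_self j)
  rw [hhull]
  refine mem_extremePoints_convexHull_range j₀ fun w hw hwτ j hj ↦ ?_
  have hsub : supp (τ j) ⊆ supp (τ j₀) := by
    rw [← hwτ, Fintype.linearCombination_apply]
    exact supp_subset_supp_sum_smul τ hw.1 (fun i ↦ (hτ i).2.1) hj
  have hs : supp (τ j) = supp (τ j₀) := hsub.eq_of_not_ssubset ((hτ j₀).1.2 _ (hτ j).1.1)
  exact (hτ j₀).1.eq_of_supp_eq hX hcop (hτ j).1.1 (sum_eq_one_of_mem_T0 (hτ j).2)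
    (sum_eq_one_of_mem_T0 (hτ j₀).2) hs

theorem minimal_zeros_are_extreme_points {p : ℕ} {ι : Type*} [Fintype ι]
    (X : Matrix (Fin p) (Fin p) ℝ) (hX : X.IsSymm) (hcop : Copositive X)
    (hT0 : (T0 X).Nonempty)
    (τ : ι → Fin p → ℝ)
    (hτ : ∀ j, IsMinimalZero X (τ j) ∧ τ j ∈ T0 X)
    (hdecomp : ∀ t ∈ T0 X, ∃ α : ι → ℝ,
      (∀ j, 0 ≤ α j) ∧ (∑ j, α j = 1) ∧ t = ∑ j, α j • τ j) :
    ∀ j₀ : ι, τ j₀ ∈ Set.extremePoints ℝ (convexHull ℝ (T0 X)) :=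
  minimal_zeros_are_extreme_points_general X hX hcop τ hτ hdecomp
end

section
/- Let X be copositive with minimal zeros τ(j), j ∈ J. Define the graph G(X) on vertex set J with edges {i,j} (i ≠ j) whenever τ(i)ᵀXτ(j) = 0. If J(s) and J(s̄) are two distinct maximal cliques of G(X) and P*(s) = ⋃_{j∈J(s)} supp(τ(j)), then P*(s) ⊄ P*(s̄). -/
open Matrix BigOperators

lemma grad_nonneg {p : ℕ} (X : Matrix (Fin p) (Fin p) ℝ) (hX : X.IsSymm)
    (hcop : Copositive X) (τ : Fin p → ℝ) (hpos : ∀ k, 0 ≤ τ k)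
    (hzero : τ ⬝ᵥ X.mulVec τ = 0) (k : Fin p) : 0 ≤ X.mulVec τ k := by
  have key : ∀ ε : ℝ, 0 < ε → 0 ≤ 2 * ε * X.mulVec τ k + ε ^ 2 * X k k := by
    intro ε hε
    have ht : ∀ m, 0 ≤ (τ + ε • (Pi.single k 1 : Fin p → ℝ)) m := by
      intro m
      have e : (τ + ε • (Pi.single k 1 : Fin p → ℝ)) m
          = τ m + ε * (if m = k then 1 else 0) := by simp [Pi.single_apply]
      rw [e]; split <;> nlinarith [hpos m]
    have := hcop _ ht
    have hsymm : τ ⬝ᵥ X.mulVec (Pi.single k 1) = X.mulVec τ k := by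
      rw [Matrix.dotProduct_mulVec, ← Matrix.mulVec_transpose, hX.eq]
      simp [Matrix.mulVec, dotProduct, Pi.single_apply, Finset.sum_ite_eq', mul_comm]
    have hek : (Pi.single k 1 : Fin p → ℝ) ⬝ᵥ X.mulVec τ = X.mulVec τ k := by
      simp [single_dotProduct]
    have hekk : (Pi.single k 1 : Fin p → ℝ) ⬝ᵥ X.mulVec (Pi.single k 1) = X k k := by
      simp [single_dotProduct, Matrix.mulVec_single]
    rw [add_dotProduct, Matrix.mulVec_add, dotProduct_add,
      dotProduct_add, Matrix.mulVec_smul, dotProduct_smul,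
      smul_dotProduct, smul_dotProduct, dotProduct_smul,
      hzero, hsymm, hek, hekk] at this
    simp only [smul_eq_mul] at this
    nlinarith [this]
  by_contra hneg
  push_neg at hneg
  rcases le_or_gt (X k k) 0 with h | h
  · have := key 1 one_pos; nlinarith
  · have hε : 0 < -(X.mulVec τ k) / X k k := div_pos (by linarith) h
    have hXk : X k k ≠ 0 := ne_of_gt h
    have e1 : 2 * (-(X.mulVec τ k) / X k k) * X.mulVec τ k
        + (-(X.mulVec τ k) / X k k) ^ 2 * X k k = -((X.mulVec τ k) ^ 2) / X k k := by
      field_simp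
      ring
    have h2 : 0 ≤ -((X.mulVec τ k) ^ 2) / X k k := e1 ▸ key _ hε
    have h3 : 0 ≤ -((X.mulVec τ k) ^ 2) := by
      have := mul_nonneg h2 h.le
      rwa [div_mul_cancel₀ _ hXk] at this
    nlinarith

lemma grad_zero_on_supp {p : ℕ} (X : Matrix (Fin p) (Fin p) ℝ) (hX : X.IsSymm)
    (hcop : Copositive X) (τ : Fin p → ℝ) (hpos : ∀ k, 0 ≤ τ k)
    (hzero : τ ⬝ᵥ X.mulVec τ = 0) (k : Fin p) (hk : 0 < τ k) : X.mulVec τ k = 0 := by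
  have hterm : ∀ m ∈ Finset.univ, 0 ≤ τ m * X.mulVec τ m := fun m _ =>
    mul_nonneg (hpos m) (grad_nonneg X hX hcop τ hpos hzero m)
  have := (Finset.sum_eq_zero_iff_of_nonneg hterm).mp hzero k (Finset.mem_univ k)
  rcases mul_eq_zero.mp this with h | h
  · exact absurd h hk.ne'
  · exact h

lemma dot_zero_of_supp_subset {p : ℕ} (X : Matrix (Fin p) (Fin p) ℝ)
    (σ τ : Fin p → ℝ) (hσpos : ∀ k, 0 ≤ σ k)
    (hgrad : ∀ k, 0 < σ k → X.mulVec τ k = 0) :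
    σ ⬝ᵥ X.mulVec τ = 0 := by
  apply Finset.sum_eq_zero
  intro k _
  rcases (hσpos k).lt_or_eq with h | h
  · rw [hgrad k h, mul_zero]
  · rw [← h, zero_mul]

lemma grad_zero_of_dot_zero {p : ℕ} (X : Matrix (Fin p) (Fin p) ℝ)
    (σ τ : Fin p → ℝ) (hσpos : ∀ k, 0 ≤ σ k)
    (hgradpos : ∀ m, 0 ≤ X.mulVec τ m) (hdot : σ ⬝ᵥ X.mulVec τ = 0)
    (k : Fin p) (hk : 0 < σ k) : X.mulVec τ k = 0 := by
  have hterm : ∀ m ∈ Finset.univ, 0 ≤ σ m * X.mulVec τ m := fun m _ =>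
    mul_nonneg (hσpos m) (hgradpos m)
  have := (Finset.sum_eq_zero_iff_of_nonneg hterm).mp hdot k (Finset.mem_univ k)
  rcases mul_eq_zero.mp this with h | h
  · exact absurd h hk.ne'
  · exact h

lemma dot_symm {p : ℕ} (X : Matrix (Fin p) (Fin p) ℝ) (hX : X.IsSymm)
    (σ τ : Fin p → ℝ) : σ ⬝ᵥ X.mulVec τ = τ ⬝ᵥ X.mulVec σ := by
  rw [Matrix.dotProduct_mulVec, ← Matrix.mulVec_transpose, hX.eq, dotProduct_comm]

/-- A clique of the minimal zeros graph: vertices pairwise adjacent, where `i` and `j`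
are adjacent iff `i ≠ j` and `τ(i)ᵀXτ(j) = 0`. -/
def IsCliqueOf {p : ℕ} {ι : Type*} (X : Matrix (Fin p) (Fin p) ℝ)
    (τ : ι → Fin p → ℝ) (C : Set ι) : Prop :=
  ∀ i ∈ C, ∀ j ∈ C, i ≠ j → τ i ⬝ᵥ X.mulVec (τ j) = 0

/-- A maximal clique of the minimal zeros graph. -/
def IsMaxCliqueOf {p : ℕ} {ι : Type*} (X : Matrix (Fin p) (Fin p) ℝ)
    (τ : ι → Fin p → ℝ) (C : Set ι) : Prop :=
  IsCliqueOf X τ C ∧ ∀ D : Set ι, IsCliqueOf X τ D → C ⊆ D → C = D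

theorem union_supports_of_distinct_max_cliques_not_subset {p : ℕ} {ι : Type*} [Fintype ι]
    (X : Matrix (Fin p) (Fin p) ℝ) (hX : X.IsSymm) (hcop : Copositive X)
    (τ : ι → Fin p → ℝ)
    (hτ : ∀ j, IsMinimalZero X (τ j) ∧ ∑ k, |τ j k| = 1)
    (C C' : Set ι) (hC : IsMaxCliqueOf X τ C) (hC' : IsMaxCliqueOf X τ C')
    (hne : C ≠ C') :
    ¬ ((⋃ j ∈ C, supp (τ j)) ⊆ ⋃ j ∈ C', supp (τ j)) := by

  intro hsub
  -- gradient facts for each zero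
  have hz : ∀ j : ι, IsZeroOf X (τ j) := fun j => ((hτ j).1).1
  have hgradpos : ∀ j k, 0 ≤ X.mulVec (τ j) k := fun j k =>
    grad_nonneg X hX hcop (τ j) (hz j).1 (hz j).2.2 k
  -- key: for i ∈ C and j ∈ C', τ i ⬝ᵥ X.mulVec (τ j) = 0
  have cross : ∀ i ∈ C, ∀ j ∈ C', τ i ⬝ᵥ X.mulVec (τ j) = 0 := by
    intro i hi j hj
    apply dot_zero_of_supp_subset X (τ i) (τ j) (hz i).1
    intro k hk
    have hkC : k ∈ ⋃ j ∈ C, supp (τ j) := Set.mem_biUnion hi hk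
    obtain ⟨l, hl, hkl⟩ := Set.mem_iUnion₂.mp (hsub hkC)
    rcases eq_or_ne l j with rfl | hlj
    · exact grad_zero_on_supp X hX hcop (τ l) (hz l).1 (hz l).2.2 k hkl
    · exact grad_zero_of_dot_zero X (τ l) (τ j) (hz l).1 (hgradpos j)
        (hC'.1 l hl j hj hlj) k hkl
  -- C ∪ C' is a clique
  have hclique : IsCliqueOf X τ (C ∪ C') := by
    intro i hi j hj hij
    rcases hi with hi | hi <;> rcases hj with hj | hj
    · exact hC.1 i hi j hj hij
    · exact cross i hi j hj
    · rw [dot_symm X hX]; exact cross j hj i hi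
    · exact hC'.1 i hi j hj hij
  have h1 : C = C ∪ C' := hC.2 _ hclique Set.subset_union_left
  have h2 : C' = C ∪ C' := hC'.2 _ hclique Set.subset_union_right
  exact hne (h1.trans h2.symm)
end

section
/- For every finite undirected graph G = (J, V) with J = {1,…,p*}, the symmetric matrix Y defined by Y_{ii} = 0, Y_{ij} = 0 if {i,j} ∈ V, and Y_{ij} = 1 otherwise (i ≠ j), is copositive, its normalized minimal zeros are exactly the standard basis vectors e_i, i ∈ J, and the minimal zeros graph G(Y) (edges {i,j} with e_iᵀYe_j = 0) equals G. -/
open Matrix BigOperators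

/-- The matrix associated to a graph `G`: zero on the diagonal and on edges, one elsewhere. -/
def graphMatrix {n : ℕ} (G : SimpleGraph (Fin n)) [DecidableRel G.Adj] :
    Matrix (Fin n) (Fin n) ℝ :=
  fun i j => if i = j then 0 else if G.Adj i j then 0 else 1

lemma graphMatrix_nonneg {n : ℕ} (G : SimpleGraph (Fin n)) [DecidableRel G.Adj]
    (i j : Fin n) : 0 ≤ graphMatrix G i j := by
  unfold graphMatrix; split_ifs <;> norm_num

lemma single_quad {n : ℕ} (X : Matrix (Fin n) (Fin n) ℝ) (i j : Fin n) :
    (Pi.single i 1 : Fin n → ℝ) ⬝ᵥ X.mulVec (Pi.single j 1) = X i j := by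
  simp [dotProduct, Matrix.mulVec, Pi.single_apply, Finset.sum_ite_eq',
    mul_ite, ite_mul]

lemma single_isZero {n : ℕ} (G : SimpleGraph (Fin n)) [DecidableRel G.Adj] (i : Fin n) :
    IsZeroOf (graphMatrix G) (Pi.single i 1) := by
  refine ⟨fun k => ?_, ?_, ?_⟩
  · rcases eq_or_ne k i with rfl | h
    · simp
    · simp [Pi.single_apply, h]
  · intro h
    have := congrFun h i
    simp [Pi.single_apply] at this
  · rw [single_quad]
    simp [graphMatrix]

lemma supp_single {n : ℕ} (i : Fin n) : supp (Pi.single i 1 : Fin n → ℝ) = {i} := by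
  ext k
  rcases eq_or_ne k i with rfl | h
  · simp [supp]
  · simp [supp, Pi.single_apply, h]

theorem graphMatrix_copositive_minimal_zeros_and_graph {n : ℕ}
    (G : SimpleGraph (Fin n)) [DecidableRel G.Adj] :
    Copositive (graphMatrix G) ∧
      (∀ τ : Fin n → ℝ,
        (IsMinimalZero (graphMatrix G) τ ∧ ∑ k, |τ k| = 1) ↔
          ∃ i : Fin n, τ = Pi.single i 1) ∧
      (∀ i j : Fin n, i ≠ j →
        ((Pi.single i 1 : Fin n → ℝ) ⬝ᵥ (graphMatrix G).mulVec (Pi.single j 1) = 0 ↔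
          G.Adj i j)) := by
  refine ⟨?_, ?_, ?_⟩
  · intro t ht
    apply Finset.sum_nonneg
    intro i _
    apply mul_nonneg (ht i)
    rw [Matrix.mulVec, dotProduct]
    apply Finset.sum_nonneg
    intro j _
    exact mul_nonneg (graphMatrix_nonneg G i j) (ht j)
  · intro τ
    constructor
    · rintro ⟨⟨⟨hnn, hne, _⟩, hmin⟩, hsum⟩
      -- find i with τ i > 0
      have : ∃ i, 0 < τ i := by
        by_contra h
        push_neg at h
        exact hne (funext fun k => le_antisymm (h k) (hnn k))
      obtain ⟨i, hi⟩ := this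
      refine ⟨i, ?_⟩
      have hsupp : supp τ = {i} := by
        by_contra h
        refine hmin _ (single_isZero G i) ?_
        rw [supp_single]
        refine ⟨?_, ?_⟩
        · intro k hk
          simp only [Set.mem_singleton_iff] at hk
          subst hk; exact hi
        · intro hsub
          exact h (le_antisymm (by simpa [supp_single] using hsub) (by
            intro k hk
            simp only [Set.mem_singleton_iff] at hk
            subst hk; exact hi))
      have hzero : ∀ k, k ≠ i → τ k = 0 := by
        intro k hk
        by_contra hne'
        have : 0 < τ k := lt_of_le_of_ne (hnn k) (Ne.symm hne')
        have : k ∈ supp τ := this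
        rw [hsupp] at this
        exact hk this
      have hτi : τ i = 1 := by
        have : ∑ k, |τ k| = |τ i| := by
          apply Finset.sum_eq_single
          · intro k _ hk; simp [hzero k hk]
          · simp
        rw [this, abs_of_pos hi] at hsum
        exact hsum
      funext k
      rcases eq_or_ne k i with rfl | h
      · simp [hτi]
      · simp [Pi.single_apply, h, hzero k h]
    · rintro ⟨i, rfl⟩
      refine ⟨⟨single_isZero G i, ?_⟩, ?_⟩
      · rintro t ⟨hnn, hne, _⟩ ⟨hsub, hne'⟩
        have : ∃ k, 0 < t k := by
          by_contra h
          push_neg at h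
          exact hne (funext fun k => le_antisymm (h k) (hnn k))
        obtain ⟨k, hk⟩ := this
        have hk' : k ∈ supp (Pi.single i 1 : Fin n → ℝ) := hsub hk
        rw [supp_single] at hk'
        apply hne'
        rw [supp_single]
        intro m hm
        simp only [Set.mem_singleton_iff] at hm
        subst hm
        exact Set.mem_setOf.2 (hk' ▸ hk)
      · rw [Finset.sum_eq_single i]
        · simp
        · intro k _ hk; simp [Pi.single_apply, hk]
        · simp
  · intro i j hij
    rw [single_quad]
    unfold graphMatrix
    simp only [hij, if_false]
    split_ifs with h <;> simp [h]
end

section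
/- The 5×5 Horn matrix H, with H_{ii}=1 and off-diagonal pattern H = [[1,-1,1,1,-1],[-1,1,-1,1,1],[1,-1,1,-1,1],[1,1,-1,1,-1],[-1,1,1,-1,1]], is copositive. -/
open Matrix BigOperators

/-- The 5×5 Horn matrix. -/
def hornMatrix : Matrix (Fin 5) (Fin 5) ℝ :=
  !![1, -1, 1, 1, -1;
     -1, 1, -1, 1, 1;
     1, -1, 1, -1, 1;
     1, 1, -1, 1, -1;
     -1, 1, 1, -1, 1]

theorem hornMatrix_copositive : Copositive hornMatrix := by
  intro t ht
  have h0 := ht 0; have h1 := ht 1; have h2 := ht 2; have h3 := ht 3; have h4 := ht 4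
  have e : t ⬝ᵥ hornMatrix.mulVec t =
      t 0 * (t 0 - t 1 + t 2 + t 3 - t 4) + t 1 * (-t 0 + t 1 - t 2 + t 3 + t 4)
      + t 2 * (t 0 - t 1 + t 2 - t 3 + t 4) + t 3 * (t 0 + t 1 - t 2 + t 3 - t 4)
      + t 4 * (-t 0 + t 1 + t 2 - t 3 + t 4) := by
    simp [dotProduct, mulVec, hornMatrix, Fin.sum_univ_five, Matrix.vecHead, Matrix.vecTail]
    ring
  rw [e]
  rcases le_total (t 3) (t 4) with h | h
  · nlinarith [sq_nonneg (t 0 - t 1 + t 2 + t 3 - t 4), mul_nonneg h1 h3,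
      mul_nonneg h2 (sub_nonneg.2 h)]
  · nlinarith [sq_nonneg (t 0 - t 1 + t 2 - t 3 + t 4), mul_nonneg h1 h4,
      mul_nonneg h0 (sub_nonneg.2 h)]
end
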